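/- Every coloring of the edges of the complete bipartite graph K_{29,29} with 5 colors contains a monochromatic cycle C_4; equivalently, r_2(C_4,5) ≤ 29. -/

import Mathlib

/-!
Some color class contains at least `⌈29² / 5⌉ = 169` of the edges between the two sides. If that
class had no `C₄`, no two rows of it could share two columns, so its row degrees `dᵢ` would satisfy
`∑ dᵢ (dᵢ - 1) ≤ 29 · 28`. But `d (d - 1) ≥ 10 d - 30` for every natural `d` (it is
`(d - 5)(d - 6) ≥ 0`), whence `∑ dᵢ (dᵢ - 1) ≥ 10 · 169 - 29 · 30 = 820 > 812`.
-/

/-- The complete multipartite graph with `p` parts, each of size `n`: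
vertices are pairs `(part, index)`, adjacent iff they lie in different parts. -/
def completeMultipartite (p n : ℕ) : SimpleGraph (Fin p × Fin n) where
  Adj v w := v.1 ≠ w.1
  symm := by first | exact fun _ _ h => Ne.symm h | exact ⟨fun _ _ h => Ne.symm h⟩
  loopless := ⟨fun _ h => h rfl⟩

instance (p n : ℕ) : DecidableRel (completeMultipartite p n).Adj :=
  fun v w => inferInstanceAs (Decidable (v.1 ≠ w.1))

/-- The edge coloring `c` contains a monochromatic cycle `C₄` in the graph `G`. -/
def HasMonoC4 {V : Type*} (G : SimpleGraph V) {k : ℕ} (c : Sym2 V → Fin k) : Prop :=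
  ∃ v₁ v₂ v₃ v₄ : V,
    v₁ ≠ v₂ ∧ v₁ ≠ v₃ ∧ v₁ ≠ v₄ ∧ v₂ ≠ v₃ ∧ v₂ ≠ v₄ ∧ v₃ ≠ v₄ ∧
    G.Adj v₁ v₂ ∧ G.Adj v₂ v₃ ∧ G.Adj v₃ v₄ ∧ G.Adj v₄ v₁ ∧
    c s(v₁, v₂) = c s(v₂, v₃) ∧ c s(v₂, v₃) = c s(v₃, v₄) ∧ c s(v₃, v₄) = c s(v₄, v₁)

/-- The `p`-partite Ramsey number `r_p(C₄, k)`: the least positive `n` such that every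
`k`-coloring of the edges of `K_n^p` contains a monochromatic `C₄`. -/
noncomputable def multipartiteRamsey (p k : ℕ) : ℕ :=
  sInf {n : ℕ | 0 < n ∧
    ∀ c : Sym2 (Fin p × Fin n) → Fin k, HasMonoC4 (completeMultipartite p n) c}

open Finset

lemma two_mul_mul_le_mul_sub_one_add (t d : ℕ) : 2 * t * d ≤ d * (d - 1) + t * (t + 1) := by
  rcases Nat.eq_zero_or_pos d with rfl | hd
  · simp
  · zify [hd]
    -- `(d - t) (d - t - 1) ≥ 0`, as a product of consecutive integers
    rcases le_or_gt (d : ℤ) t with h | h <;> nlinarith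

lemma exists_two_rows_share_two_of_card_offDiag_lt {α β : Type*} [Fintype α] [Fintype β]
    [DecidableEq β] (R : α → Finset β)
    (h : #(univ : Finset β).offDiag < ∑ i, #(R i).offDiag) :
    ∃ i₁ i₂ j₁ j₂, i₁ ≠ i₂ ∧ j₁ ≠ j₂ ∧ j₁ ∈ R i₁ ∧ j₂ ∈ R i₁ ∧ j₁ ∈ R i₂ ∧ j₂ ∈ R i₂ := by
  rw [← card_sigma] at h
  obtain ⟨⟨i₁, p₁⟩, hp₁, ⟨i₂, p₂⟩, hp₂, hne, rfl : p₁ = p₂⟩ :=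
    exists_ne_map_eq_of_card_lt_of_maps_to h (f := fun x => x.2)
      (fun x hx => by simp_all)
  simp only [mem_sigma, mem_univ, true_and, mem_offDiag] at hp₁ hp₂
  exact ⟨i₁, i₂, p₁.1, p₁.2, fun h => hne (by subst h; rfl), hp₁.2.2, hp₁.1, hp₁.2.1,
    hp₂.1, hp₂.2.1⟩

lemma exists_rectangle_of_card_lt {α β : Type*} [Fintype α] [Fintype β] [DecidableEq β]
    (r : α → β → Prop) [∀ i, DecidablePred (r i)] (t : ℕ)
    (h : Fintype.card α * (t * (t + 1)) + Fintype.card β * (Fintype.card β - 1) <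
      2 * t * #{p : α × β | r p.1 p.2}) :
    ∃ i₁ i₂ j₁ j₂, i₁ ≠ i₂ ∧ j₁ ≠ j₂ ∧ r i₁ j₁ ∧ r i₁ j₂ ∧ r i₂ j₁ ∧ r i₂ j₂ := by
  set R : α → Finset β := fun i => {j | r i j}
  have hsum : #{p : α × β | r p.1 p.2} = ∑ i, #(R i) := by
    simp only [R, card_filter, Fintype.sum_prod_type]
  have hrow (i : α) : 2 * t * #(R i) ≤ #(R i).offDiag + t * (t + 1) := by
    rw [offDiag_card, ← Nat.mul_sub_one]
    exact two_mul_mul_le_mul_sub_one_add t _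
  have hpairs : #(univ : Finset β).offDiag < ∑ i, #(R i).offDiag := by
    have := sum_le_sum fun i (_ : i ∈ univ) => hrow i
    rw [← mul_sum, sum_add_distrib, sum_const, card_univ, smul_eq_mul, ← hsum] at this
    rw [offDiag_card, card_univ, ← Nat.mul_sub_one]
    omega
  simpa [R] using exists_two_rows_share_two_of_card_offDiag_lt R hpairs

lemma hasMonoC4_of_rectangle {n k : ℕ} (c : Sym2 (Fin 2 × Fin n) → Fin k) (κ : Fin k)
    {i₁ i₂ j₁ j₂ : Fin n} (hi : i₁ ≠ i₂) (hj : j₁ ≠ j₂)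
    (h₁₁ : c s((0, i₁), (1, j₁)) = κ) (h₁₂ : c s((0, i₁), (1, j₂)) = κ)
    (h₂₁ : c s((0, i₂), (1, j₁)) = κ) (h₂₂ : c s((0, i₂), (1, j₂)) = κ) :
    HasMonoC4 (completeMultipartite 2 n) c := by
  refine ⟨(0, i₁), (1, j₁), (0, i₂), (1, j₂), ?_⟩
  simp [completeMultipartite, Sym2.eq_swap (a := ((1 : Fin 2), _)), h₁₁, h₁₂, h₂₁, h₂₂, hi, hj]

/-- Every 5-coloring of the edges of the complete bipartite graph `K_{29,29}` contains a
monochromatic `C₄`; equivalently, `r₂(C₄, 5) ≤ 29`. -/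
theorem bipartiteRamsey_five_colors_le :
    (∀ c : Sym2 (Fin 2 × Fin 29) → Fin 5, HasMonoC4 (completeMultipartite 2 29) c) ∧
      multipartiteRamsey 2 5 ≤ 29 := by
  have mono (c : Sym2 (Fin 2 × Fin 29) → Fin 5) : HasMonoC4 (completeMultipartite 2 29) c := by
    obtain ⟨κ, hκ⟩ := Fintype.exists_lt_card_fiber_of_mul_lt_card (n := 168)
      (fun p : Fin 29 × Fin 29 => c s((0, p.1), (1, p.2))) (by simp)
    -- with `t = 5`: `29 · 30 + 29 · 28 < 10 · 169`
    obtain ⟨i₁, i₂, j₁, j₂, hi, hj, h₁₁, h₁₂, h₂₁, h₂₂⟩ :=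
      exists_rectangle_of_card_lt (fun i j => c s((0, i), (1, j)) = κ) 5
        (by simp only [Fintype.card_fin]; omega)
    exact hasMonoC4_of_rectangle c κ hi hj h₁₁ h₁₂ h₂₁ h₂₂
  exact ⟨mono, Nat.sInf_le ⟨by norm_num, mono⟩⟩
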